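/- Let i : [0,∞) → [0,∞) be continuous, strictly increasing with i(0)=0, and suppose there exist δ₀ ∈ (0,1) and δ₁ > 0 with ∫₀ᵗ i(s)ds ≤ δ₀·i(t)·t + δ₁·i(t) for all t > 0. Then i(t) → +∞ as t → +∞. -/

import Mathlib

/-!
A monotone `i` that does not tend to infinity is bounded by its supremum `L > 0`. Since
`δ₀ < 1`, some value `i s` exceeds `δ₀ L`, and then for `t ≥ s` the integral `∫₀ᵗ i` is at least
`(t - s) i s`, whereas the Ambrosetti–Rabinowitz bound keeps it below `δ₀ L t + δ₁ L`, a linear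
function of `t` with smaller slope: absurd for large `t`.
-/

open Filter

theorem monotone_of_monotoneOn_Ici_of_eq_zero_of_nonpos {f : ℝ → ℝ}
    (hf : MonotoneOn f (Set.Ici 0)) (hnonneg : ∀ t, 0 ≤ f t) (hzero : ∀ t ≤ 0, f t = 0) :
    Monotone f := by
  intro x y hxy
  rcases le_or_gt x 0 with hx | hx
  · rw [hzero x hx]
    exact hnonneg y
  · exact hf (Set.mem_Ici.2 hx.le) (Set.mem_Ici.2 (hx.le.trans hxy)) hxy

theorem Monotone.mul_le_intervalIntegral {f : ℝ → ℝ} (hf : Monotone f) {a s t : ℝ}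
    (ha : 0 ≤ f a) (has : a ≤ s) (hst : s ≤ t) : (t - s) * f s ≤ ∫ x in a..t, f x := by
  have hhead : 0 ≤ ∫ x in a..s, f x :=
    intervalIntegral.integral_nonneg has fun x hx => ha.trans (hf hx.1)
  have htail : (t - s) * f s ≤ ∫ x in s..t, f x := by
    simpa using intervalIntegral.integral_mono_on hst
      (intervalIntegrable_const (μ := MeasureTheory.volume)) hf.intervalIntegrable
      fun x hx => hf hx.1
  rw [← intervalIntegral.integral_add_adjacent_intervals hf.intervalIntegrable
    hf.intervalIntegrable]
  linarith

theorem Monotone.tendsto_atTop_of_integral_le {f : ℝ → ℝ} (hf : Monotone f) (h0 : 0 ≤ f 0)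
    (hpos : ∃ x, 0 < f x) {δ₀ δ₁ : ℝ} (hδ₀ : δ₀ ∈ Set.Ico 0 1) (hδ₁ : 0 ≤ δ₁)
    (hAR : ∀ t, 0 < t → ∫ x in (0 : ℝ)..t, f x ≤ δ₀ * f t * t + δ₁ * f t) :
    Tendsto f atTop atTop := by
  rw [tendsto_atTop_atTop_iff_of_monotone hf]
  by_contra! hbdd
  obtain ⟨b, hb⟩ := hbdd
  set L := ⨆ t, f t
  have hle : ∀ t, f t ≤ L := le_ciSup ⟨b, Set.forall_mem_range.2 fun a => (hb a).le⟩
  have hL : 0 < L := hpos.elim fun x hx => hx.trans_le (hle x)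
  obtain ⟨s, hs⟩ : ∃ s, δ₀ * L < f s :=
    exists_lt_of_lt_ciSup (mul_lt_of_lt_one_left hL hδ₀.2)
  set r := max s 0
  have hr : δ₀ * L < f r := hs.trans_le (hf (le_max_left s 0))
  have hlin : ∀ t, r ≤ t → 0 < t → (f r - δ₀ * L) * t ≤ r * f r + δ₁ * L := by
    intro t hst ht
    have hsandwich := calc
      (t - r) * f r ≤ ∫ x in (0 : ℝ)..t, f x :=
        hf.mul_le_intervalIntegral h0 (le_max_right s 0) hst
      _ ≤ δ₀ * f t * t + δ₁ * f t := hAR t ht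
      _ ≤ δ₀ * L * t + δ₁ * L := by
        have := hδ₀.1
        gcongr <;> exact hle t
    linarith
  have hgrow : Tendsto (fun t => (f r - δ₀ * L) * t) atTop atTop :=
    tendsto_id.const_mul_atTop (sub_pos.2 hr)
  obtain ⟨t, hbig, hst, ht⟩ := ((hgrow.eventually_gt_atTop (r * f r + δ₁ * L)).and
    ((eventually_ge_atTop r).and (eventually_gt_atTop 0))).exists
  exact (hlin t hst ht).not_gt hbig

theorem AR_implies_tendsto_atTop_general (i : ℝ → ℝ)
    (hi_nonneg : ∀ t, 0 ≤ i t) (hi_zero : ∀ t ≤ 0, i t = 0)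
    (hi_mono : StrictMonoOn i (Set.Ici (0 : ℝ)))
    (δ₀ δ₁ : ℝ) (hδ₀ : δ₀ ∈ Set.Ioo (0 : ℝ) 1) (hδ₁ : 0 < δ₁)
    (hAR : ∀ t, 0 < t → (∫ s in (0 : ℝ)..t, i s) ≤ δ₀ * i t * t + δ₁ * i t) :
    Tendsto i atTop atTop := by
  have hmono : Monotone i :=
    monotone_of_monotoneOn_Ici_of_eq_zero_of_nonpos hi_mono.monotoneOn hi_nonneg hi_zero
  have hpos : 0 < i 1 :=
    (hi_nonneg 0).trans_lt (hi_mono Set.self_mem_Ici (Set.mem_Ici.2 zero_le_one) one_pos)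
  exact hmono.tendsto_atTop_of_integral_le (hi_nonneg 0) ⟨1, hpos⟩
    (Set.Ioo_subset_Ico_self hδ₀) hδ₁.le hAR

theorem AR_implies_tendsto_atTop (i : ℝ → ℝ) (hi_cont : Continuous i)
    (hi_nonneg : ∀ t, 0 ≤ i t) (hi_zero : ∀ t ≤ 0, i t = 0)
    (hi_mono : StrictMonoOn i (Set.Ici (0 : ℝ)))
    (δ₀ δ₁ : ℝ) (hδ₀ : δ₀ ∈ Set.Ioo (0 : ℝ) 1) (hδ₁ : 0 < δ₁)
    (hAR : ∀ t, 0 < t → (∫ s in (0 : ℝ)..t, i s) ≤ δ₀ * i t * t + δ₁ * i t) :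
    Tendsto i atTop atTop :=
  AR_implies_tendsto_atTop_general i hi_nonneg hi_zero hi_mono δ₀ δ₁ hδ₀ hδ₁ hAR
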